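/- Under the PRP mediator, every improvement path in an authors game with action-targeted utility is finite (the game has the finite improvement property), so any better-response dynamics converges to a pure Nash equilibrium. -/
import Mathlib


open Finset

noncomputable section

/-- Highest quality of a document on topic `k` under profile `a`:
`B_k(a) = max_j Q_{j,k} · 1[a_j = k]` (with value `0` when the max is over an empty set). -/
def hiQ {n m : ℕ} (Q : Fin n → Fin m → ℝ) (k : Fin m) (a : Fin n → Fin m) : ℝ :=
  Finset.univ.fold max 0 (fun j => if a j = k then Q j k else 0)

/-- Number of authors writing on topic `k` with the highest quality `B_k(a)`. -/
def numTop {n m : ℕ} (Q : Fin n → Fin m → ℝ) (k : Fin m) (a : Fin n → Fin m) : ℕ :=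
  (Finset.univ.filter (fun j => a j = k ∧ Q j k = hiQ Q k a)).card

/-- The PRP mediator: first-rank probability of author `j` on topic `k` under profile `a`. -/
def prp {n m : ℕ} (Q : Fin n → Fin m → ℝ) (k : Fin m) (a : Fin n → Fin m) (j : Fin n) : ℝ :=
  if a j = k ∧ Q j k = hiQ Q k a then 1 / (numTop Q k a : ℝ) else 0

/-- Exposure-targeted utility under the PRP mediator. -/
def uEx {n m : ℕ} (D : Fin m → ℝ) (Q : Fin n → Fin m → ℝ) (a : Fin n → Fin m) (j : Fin n) : ℝ :=
  D (a j) * prp Q (a j) a j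

/-- Action-targeted utility under the PRP mediator. -/
def uAc {n m : ℕ} (D : Fin m → ℝ) (Q : Fin n → Fin m → ℝ) (a : Fin n → Fin m) (j : Fin n) : ℝ :=
  D (a j) * prp Q (a j) a j * Q j (a j)

/-- `b` is obtained from `a` by a unilateral deviation of author `p` strictly
increasing her utility (an improvement step). -/
def ImpStep {n m : ℕ} (u : (Fin n → Fin m) → Fin n → ℝ)
    (a b : Fin n → Fin m) (p : Fin n) : Prop :=
  (∀ i, i ≠ p → b i = a i) ∧ b p ≠ a p ∧ u a p < u b p

/-- `γ` is an improvement path: each consecutive pair of profiles is an improvement step. -/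
def IsImpPath {n m l : ℕ} (u : (Fin n → Fin m) → Fin n → ℝ)
    (γ : Fin (l + 1) → Fin n → Fin m) : Prop :=
  ∀ r : Fin l, ∃ p, ImpStep u (γ r.castSucc) (γ r.succ) p

/-- `W_k(γ)`: the minimum of `H_k` over all profiles in the finite path `γ`. -/
def minTop {n m l : ℕ} (Q : Fin n → Fin m → ℝ) (k : Fin m)
    (γ : Fin (l + 1) → Fin n → Fin m) : ℕ :=
  Finset.univ.inf' Finset.univ_nonempty (fun r => numTop Q k (γ r))

/-- `S_k(γ)`: the maximum of `B_k` over all profiles in the finite path `γ`. -/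
def maxQ {n m l : ℕ} (Q : Fin n → Fin m → ℝ) (k : Fin m)
    (γ : Fin (l + 1) → Fin n → Fin m) : ℝ :=
  Finset.univ.sup' Finset.univ_nonempty (fun r => hiQ Q k (γ r))

namespace AuthorsAux

variable {n m : ℕ} (Q : Fin n → Fin m → ℝ)

lemma hiQ_nonneg (k : Fin m) (a : Fin n → Fin m) : 0 ≤ hiQ Q k a :=
  (Finset.le_fold_max _).2 (Or.inl le_rfl)

lemma le_hiQ {k : Fin m} {a : Fin n → Fin m} {j : Fin n} (h : a j = k) :
    Q j k ≤ hiQ Q k a :=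
  (Finset.le_fold_max _).2 (Or.inr ⟨j, Finset.mem_univ j, by simp [h]⟩)

lemma hiQ_le {k : Fin m} {a : Fin n → Fin m} {x : ℝ} (h0 : 0 ≤ x)
    (h : ∀ j, a j = k → Q j k ≤ x) : hiQ Q k a ≤ x := by
  refine (Finset.fold_max_le _).2 ⟨h0, fun j _ => ?_⟩
  by_cases hj : a j = k
  · simpa [hj] using h j hj
  · simpa [hj] using h0

lemma hiQ_attained {k : Fin m} {a : Fin n → Fin m} (h : hiQ Q k a ≠ 0) :
    ∃ j, a j = k ∧ Q j k = hiQ Q k a := by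
  have h1 : hiQ Q k a ≤ hiQ Q k a := le_rfl
  have h2 := (Finset.le_fold_max _).1 h1
  rcases h2 with h2 | ⟨j, _, hj⟩
  · exact absurd (le_antisymm h2 (hiQ_nonneg Q k a)) h
  · by_cases hjk : a j = k
    · refine ⟨j, hjk, le_antisymm (le_hiQ Q hjk) (by simpa [hjk] using hj)⟩
    · simp [hjk] at hj
      exact absurd (le_antisymm hj (hiQ_nonneg Q k a)) h

end AuthorsAux

namespace AuthorsAux2
open AuthorsAux

variable {n m : ℕ} (D : Fin m → ℝ) (Q : Fin n → Fin m → ℝ)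

def Vset : Finset ℝ :=
  Finset.image (fun x : Fin n × Fin m × Fin n => D x.2.1 * Q x.1 x.2.1 / ((x.2.2 : ℕ) + 1))
    Finset.univ

def rk (x : ℝ) : ℕ := ((Vset D Q).filter (fun v => 0 < v ∧ v ≤ x)).card

def G (x : ℝ) : ℝ := ((n : ℝ) + 2) ^ (rk D Q x) - 1

lemma one_le_base : (1 : ℝ) ≤ (n : ℝ) + 2 := by have : (0:ℝ) ≤ n := Nat.cast_nonneg n; linarith

lemma G_nonneg (x : ℝ) : 0 ≤ G D Q x := by
  have := one_le_pow₀ (n := rk D Q x) (one_le_base (n := n))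
  simp [G]; linarith

lemma rk_lt {x u' : ℝ} (hx : x < u') (hmem : u' ∈ Vset D Q) (hpos : 0 < u') :
    rk D Q x < rk D Q u' := by
  apply Finset.card_lt_card
  rw [Finset.ssubset_iff_of_subset]
  · exact ⟨u', Finset.mem_filter.2 ⟨hmem, hpos, le_rfl⟩,
      fun hc => absurd (Finset.mem_filter.1 hc).2.2 (not_le.2 hx)⟩
  · intro v hv
    rcases Finset.mem_filter.1 hv with ⟨hv1, hv2, hv3⟩
    exact Finset.mem_filter.2 ⟨hv1, hv2, hv3.trans hx.le⟩

lemma G_le {x u' : ℝ} (hx : x < u') (hmem : u' ∈ Vset D Q) (hpos : 0 < u') :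
    G D Q x ≤ ((n : ℝ) + 2) ^ (rk D Q u' - 1) - 1 := by
  have h := rk_lt D Q hx hmem hpos
  have : rk D Q x ≤ rk D Q u' - 1 := by omega
  have := pow_le_pow_right₀ (one_le_base (n := n)) this
  simp only [G]; linarith

lemma one_le_rk {u' : ℝ} (hmem : u' ∈ Vset D Q) (hpos : 0 < u') : 1 ≤ rk D Q u' :=
  Finset.card_pos.2 ⟨u', Finset.mem_filter.2 ⟨hmem, hpos, le_rfl⟩⟩

def F (a : Fin n → Fin m) (l : Fin m) : ℝ :=
  ∑ t ∈ Finset.range (numTop Q l a), G D Q (D l * hiQ Q l a / ((t : ℝ) + 1))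

def Phi (a : Fin n → Fin m) : ℝ := ∑ l, F D Q a l

lemma F_nonneg (a : Fin n → Fin m) (l : Fin m) : 0 ≤ F D Q a l :=
  Finset.sum_nonneg fun t _ => G_nonneg D Q _

end AuthorsAux2

namespace AuthorsAux2

variable {n m : ℕ} (D : Fin m → ℝ) (Q : Fin n → Fin m → ℝ)
open AuthorsAux

lemma numTop_le (l : Fin m) (c : Fin n → Fin m) : numTop Q l c ≤ n := by
  unfold numTop
  calc (Finset.univ.filter _).card ≤ Finset.univ.card := Finset.card_filter_le _ _
  _ = n := by simp

lemma step_potential (hD : ∀ k, 0 ≤ D k) (hQ : ∀ j k, Q j k ∈ Set.Icc (0:ℝ) 1)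
    {a b : Fin n → Fin m} {p : Fin n}
    (h : ImpStep (uAc D Q) a b p) : Phi D Q a < Phi D Q b := by
  obtain ⟨hoff, hne, hlt⟩ := h
  -- old utility nonneg
  have hprpa : 0 ≤ prp Q (a p) a p := by
    unfold prp; split
    · positivity
    · exact le_rfl
  have hu0 : 0 ≤ uAc D Q a p :=
    mul_nonneg (mul_nonneg (hD _) hprpa) (hQ p (a p)).1
  have hu'pos : 0 < uAc D Q b p := lt_of_le_of_lt hu0 hlt
  -- p is a top author at the target topic
  have htopb : Q p (b p) = hiQ Q (b p) b := by
    by_contra hc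
    have h0 : uAc D Q b p = 0 := by
      unfold uAc prp
      rw [if_neg (by tauto)]
      ring
    rw [h0] at hu'pos; exact lt_irrefl 0 hu'pos
  have hu'eq : uAc D Q b p = D (b p) * Q p (b p) / (numTop Q (b p) b : ℝ) := by
    unfold uAc prp
    rw [if_pos ⟨rfl, htopb⟩]
    ring
  have hp_mem_b : p ∈ Finset.univ.filter (fun j => b j = b p ∧ Q j (b p) = hiQ Q (b p) b) :=
    Finset.mem_filter.2 ⟨Finset.mem_univ p, rfl, htopb⟩
  have hHb1 : 1 ≤ numTop Q (b p) b := Finset.card_pos.2 ⟨p, hp_mem_b⟩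
  have hHble : numTop Q (b p) b ≤ n := numTop_le Q (b p) b
  have hnpos : 0 < n := p.pos
  -- u' is in the value grid
  have hmem : uAc D Q b p ∈ Vset D Q := by
    rw [hu'eq]
    refine Finset.mem_image.2 ⟨(p, b p, ⟨numTop Q (b p) b - 1, by omega⟩), Finset.mem_univ _, ?_⟩
    have hc : (numTop Q (b p) b - 1 : ℕ) + 1 = numTop Q (b p) b := by omega
    simp only []
    norm_cast
    rw [hc]
  -- positivity of factors
  have hDpos : 0 < D (b p) := by
    rcases (hD (b p)).lt_or_eq with h' | h'
    · exact h'
    · exfalso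
      rw [hu'eq, ← h'] at hu'pos
      simp at hu'pos
  have hQpp : 0 ≤ Q p (b p) := (hQ p (b p)).1
  -- target topic: old best ≤ p's quality
  have hble : hiQ Q (b p) a ≤ Q p (b p) := by
    rw [htopb]
    refine hiQ_le Q (hiQ_nonneg Q _ b) fun j hj => ?_
    have hjp : j ≠ p := by rintro rfl; exact hne hj.symm
    rw [← hoff j hjp] at hj
    exact le_hiQ Q hj
  -- other topics are unchanged
  have hO : ∀ l, l ≠ a p → l ≠ b p → F D Q b l = F D Q a l := by
    intro l hl1 hl2
    have hfun : (fun j => if b j = l then Q j l else 0) =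
        (fun j => if a j = l then Q j l else 0) := by
      funext j
      by_cases hj : j = p
      · subst hj
        rw [if_neg (fun hh => hl2 hh.symm), if_neg (fun hh => hl1 hh.symm)]
      · rw [hoff j hj]
    have hhi : hiQ Q l b = hiQ Q l a := by unfold hiQ; rw [hfun]
    have hnum : numTop Q l b = numTop Q l a := by
      unfold numTop
      congr 1
      apply Finset.filter_congr
      intro j _
      rw [hhi]
      by_cases hj : j = p
      · subst hj
        constructor
        · rintro ⟨h1, -⟩; exact absurd h1.symm hl2
        · rintro ⟨h1, -⟩; exact absurd h1.symm hl1
      · rw [hoff j hj]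
    unfold F
    rw [hhi, hnum]
  -- source topic analysis
  have hSrc : -(G D Q (uAc D Q a p)) ≤ F D Q b (a p) - F D Q a (a p) := by
    by_cases htopa : Q p (a p) = hiQ Q (a p) a
    · -- p was a top author at the source
      have hua : uAc D Q a p = D (a p) * Q p (a p) / (numTop Q (a p) a : ℝ) := by
        unfold uAc prp
        rw [if_pos ⟨rfl, htopa⟩]
        ring
      have hp_mem_a : p ∈ Finset.univ.filter
          (fun j => a j = a p ∧ Q j (a p) = hiQ Q (a p) a) :=
        Finset.mem_filter.2 ⟨Finset.mem_univ p, rfl, htopa⟩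
      have hHa1 : 1 ≤ numTop Q (a p) a := Finset.card_pos.2 ⟨p, hp_mem_a⟩
      by_cases hHa : numTop Q (a p) a = 1
      · -- unique top: F at source drops by at most G(u)
        have hFa : F D Q a (a p) = G D Q (uAc D Q a p) := by
          unfold F
          rw [hHa, Finset.sum_range_one]
          congr 1
          rw [hua, ← htopa, hHa]
          norm_num
        have := F_nonneg D Q b (a p)
        linarith
      · -- shared top
        have hHa2 : 2 ≤ numTop Q (a p) a := by omega
        obtain ⟨j, hjmem, hjp⟩ : ∃ j ∈ Finset.univ.filter
            (fun j => a j = a p ∧ Q j (a p) = hiQ Q (a p) a), j ≠ p := by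
          have h1 : 1 < (Finset.univ.filter
              (fun j => a j = a p ∧ Q j (a p) = hiQ Q (a p) a)).card := by
            unfold numTop at hHa2; omega
          obtain ⟨x, hx, y, hy, hxy⟩ := Finset.one_lt_card.1 h1
          by_cases hxp : x = p
          · exact ⟨y, hy, by rw [← hxp]; exact fun hh => hxy hh.symm⟩
          · exact ⟨x, hx, hxp⟩
        obtain ⟨hja, hjq⟩ := (Finset.mem_filter.1 hjmem).2
        have hhi : hiQ Q (a p) b = hiQ Q (a p) a := by
          refine le_antisymm (hiQ_le Q (hiQ_nonneg Q _ a) fun i hi => ?_) ?_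
          · have hip : i ≠ p := by rintro rfl; exact hne hi
            rw [hoff i hip] at hi
            exact le_hiQ Q hi
          · rw [← hjq]
            exact le_hiQ Q (by rw [hoff j hjp]; exact hja)
        have hfil : Finset.univ.filter (fun i => b i = a p ∧ Q i (a p) = hiQ Q (a p) b) =
            (Finset.univ.filter (fun i => a i = a p ∧ Q i (a p) = hiQ Q (a p) a)).erase p := by
          ext i
          simp only [Finset.mem_erase, Finset.mem_filter, Finset.mem_univ, true_and]
          constructor
          · rintro ⟨h1, h2⟩
            have hip : i ≠ p := by rintro rfl; exact hne h1
            rw [hoff i hip] at h1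
            rw [hhi] at h2
            exact ⟨hip, h1, h2⟩
          · rintro ⟨hip, h1, h2⟩
            rw [← hoff i hip] at h1
            rw [← hhi] at h2
            exact ⟨h1, h2⟩
        have hnumb : numTop Q (a p) b = numTop Q (a p) a - 1 := by
          unfold numTop
          rw [hfil, Finset.card_erase_of_mem hp_mem_a]
        have hFsum : F D Q a (a p) = F D Q b (a p) +
            G D Q (D (a p) * hiQ Q (a p) a / ((numTop Q (a p) a - 1 : ℕ) + 1)) := by
          have h1 : F D Q a (a p) = ∑ t ∈ Finset.range ((numTop Q (a p) a - 1) + 1),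
              G D Q (D (a p) * hiQ Q (a p) a / ((t : ℝ) + 1)) := by
            have hb' : (numTop Q (a p) a - 1) + 1 = numTop Q (a p) a := by omega
            unfold F
            rw [hb']
          rw [h1, Finset.sum_range_succ]
          congr 1
          unfold F
          rw [hhi, hnumb]
        have harg : (D (a p) * hiQ Q (a p) a / ((numTop Q (a p) a - 1 : ℕ) + 1) : ℝ) =
            uAc D Q a p := by
          rw [hua, ← htopa]
          have hc : ((numTop Q (a p) a - 1 : ℕ) : ℝ) + 1 = (numTop Q (a p) a : ℝ) := by
            have : (numTop Q (a p) a - 1 : ℕ) + 1 = numTop Q (a p) a := by omega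
            exact_mod_cast congrArg (Nat.cast : ℕ → ℝ) this
          rw [hc]
        rw [harg] at hFsum
        linarith
    · -- p was not a top author at the source: source topic unchanged
      have hu00 : uAc D Q a p = 0 := by
        unfold uAc prp
        rw [if_neg (by tauto)]
        ring
      have hQa0 : hiQ Q (a p) a ≠ 0 := by
        intro h0
        apply htopa
        have h1 : Q p (a p) ≤ 0 := by rw [← h0]; exact le_hiQ Q rfl
        have h2 : Q p (a p) = 0 := le_antisymm h1 (hQ p (a p)).1
        rw [h2, h0]
      obtain ⟨j, hja, hjq⟩ := hiQ_attained Q hQa0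
      have hjp : j ≠ p := by rintro rfl; exact htopa hjq
      have hhi : hiQ Q (a p) b = hiQ Q (a p) a := by
        refine le_antisymm (hiQ_le Q (hiQ_nonneg Q _ a) fun i hi => ?_) ?_
        · have hip : i ≠ p := by rintro rfl; exact hne hi
          rw [hoff i hip] at hi
          exact le_hiQ Q hi
        · rw [← hjq]
          exact le_hiQ Q (by rw [hoff j hjp]; exact hja)
      have hfil : Finset.univ.filter (fun i => b i = a p ∧ Q i (a p) = hiQ Q (a p) b) =
          Finset.univ.filter (fun i => a i = a p ∧ Q i (a p) = hiQ Q (a p) a) := by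
        ext i
        simp only [Finset.mem_filter, Finset.mem_univ, true_and]
        rw [hhi]
        by_cases hip : i = p
        · subst hip
          constructor
          · rintro ⟨h1, -⟩; exact absurd h1 hne
          · rintro ⟨-, h2⟩; exact absurd h2 htopa
        · rw [hoff i hip]
      have hFeq : F D Q b (a p) = F D Q a (a p) := by
        unfold F numTop
        rw [hfil, hhi]
      rw [hFeq, hu00]
      simp [G_nonneg D Q 0]
  -- target topic analysis
  set R := rk D Q (uAc D Q b p) with hR
  have hR1 : 1 ≤ R := one_le_rk D Q hmem hu'pos
  set M : ℝ := ((n : ℝ) + 2) ^ (R - 1) - 1 with hM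
  have hXge : (1 : ℝ) ≤ ((n : ℝ) + 2) ^ (R - 1) := one_le_pow₀ (one_le_base (n := n))
  have hM0 : 0 ≤ M := by rw [hM]; linarith
  have hTgt : G D Q (uAc D Q b p) - (n : ℝ) * M ≤ F D Q b (b p) - F D Q a (b p) := by
    have hpa_notmem : p ∉ Finset.univ.filter
        (fun i => a i = b p ∧ Q i (b p) = hiQ Q (b p) a) := by
      simp only [Finset.mem_filter, Finset.mem_univ, true_and, not_and]
      intro h1
      exact absurd h1.symm hne
    rcases hble.lt_or_eq with hbeat | htie
    · -- beat : p strictly outperforms the old best at the target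
      have hfil : Finset.univ.filter (fun i => b i = b p ∧ Q i (b p) = hiQ Q (b p) b) =
          {p} := by
        ext i
        simp only [Finset.mem_filter, Finset.mem_univ, true_and, Finset.mem_singleton]
        constructor
        · rintro ⟨h1, h2⟩
          by_contra hip
          rw [hoff i hip] at h1
          have h3 : Q i (b p) ≤ hiQ Q (b p) a := le_hiQ Q h1
          rw [h2, ← htopb] at h3
          exact absurd h3 (not_le.2 hbeat)
        · rintro rfl
          exact ⟨rfl, htopb⟩
      have hnumb : numTop Q (b p) b = 1 := by
        unfold numTop
        rw [hfil, Finset.card_singleton]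
      have hFb : F D Q b (b p) = G D Q (uAc D Q b p) := by
        unfold F
        rw [hnumb, Finset.sum_range_one]
        congr 1
        rw [hu'eq, ← htopb, hnumb]
        norm_num
      have hFa : F D Q a (b p) ≤ (n : ℝ) * M := by
        have hterm : ∀ t ∈ Finset.range (numTop Q (b p) a),
            G D Q (D (b p) * hiQ Q (b p) a / ((t : ℝ) + 1)) ≤ M := by
          intro t _
          apply G_le D Q _ hmem hu'pos
          have h1 : D (b p) * hiQ Q (b p) a / ((t : ℝ) + 1) ≤ D (b p) * hiQ Q (b p) a :=
            div_le_self (mul_nonneg (hD _) (hiQ_nonneg Q _ a))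
              (by have := Nat.cast_nonneg (α := ℝ) t; linarith)
          have h2 : D (b p) * hiQ Q (b p) a < D (b p) * Q p (b p) :=
            mul_lt_mul_of_pos_left hbeat hDpos
          have h3 : uAc D Q b p = D (b p) * Q p (b p) := by
            rw [hu'eq, hnumb]
            norm_num
          rw [h3]
          exact lt_of_le_of_lt h1 h2
        calc F D Q a (b p) ≤ ∑ _t ∈ Finset.range (numTop Q (b p) a), M :=
              Finset.sum_le_sum hterm
          _ = (numTop Q (b p) a : ℝ) * M := by
              rw [Finset.sum_const, Finset.card_range, nsmul_eq_mul]
          _ ≤ (n : ℝ) * M := by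
              have := numTop_le Q (b p) a
              have : ((numTop Q (b p) a : ℕ) : ℝ) ≤ (n : ℝ) := by exact_mod_cast this
              nlinarith
      linarith [hFb, hFa]
    · -- tie : p matches the old best at the target
      have hhi : hiQ Q (b p) b = hiQ Q (b p) a := by rw [← htopb, htie]
      have hfil : Finset.univ.filter (fun i => b i = b p ∧ Q i (b p) = hiQ Q (b p) b) =
          insert p (Finset.univ.filter (fun i => a i = b p ∧ Q i (b p) = hiQ Q (b p) a)) := by
        ext i
        simp only [Finset.mem_filter, Finset.mem_univ, true_and, Finset.mem_insert]
        by_cases hip : i = p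
        · subst hip
          simp [htopb]
        · rw [hoff i hip, hhi]
          constructor
          · exact fun hh => Or.inr hh
          · rintro (hh | hh)
            · exact absurd hh hip
            · exact hh
      have hnumb : numTop Q (b p) b = numTop Q (b p) a + 1 := by
        unfold numTop
        rw [hfil, Finset.card_insert_of_notMem hpa_notmem]
      have hFb : F D Q b (b p) = F D Q a (b p) + G D Q (uAc D Q b p) := by
        unfold F
        rw [hhi, hnumb, Finset.sum_range_succ]
        congr 1
        rw [hu'eq, hnumb]
        have hcast : ((numTop Q (b p) a + 1 : ℕ) : ℝ) = (numTop Q (b p) a : ℝ) + 1 := by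
          push_cast; ring
        rw [hcast, htie]
      rw [hFb]
      have hnM : 0 ≤ (n : ℝ) * M := mul_nonneg (Nat.cast_nonneg n) hM0
      linarith
  -- assembling the potential difference
  have hsplit : Phi D Q b - Phi D Q a =
      (F D Q b (a p) - F D Q a (a p)) + (F D Q b (b p) - F D Q a (b p)) := by
    unfold Phi
    rw [← Finset.sum_sub_distrib]
    rw [← Finset.sum_subset (Finset.subset_univ ({a p, b p} : Finset (Fin m)))
      (fun l _ hl => by
        simp only [Finset.mem_insert, Finset.mem_singleton, not_or] at hl
        rw [hO l hl.1 hl.2, sub_self])]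
    rw [Finset.sum_pair (Ne.symm hne)]
  have hGu : G D Q (uAc D Q a p) ≤ M := G_le D Q hlt hmem hu'pos
  have hGu' : G D Q (uAc D Q b p) = ((n : ℝ) + 2) ^ R - 1 := rfl
  have hpow : ((n : ℝ) + 2) ^ R = ((n : ℝ) + 2) ^ (R - 1) * ((n : ℝ) + 2) := by
    rw [← pow_succ]
    congr 1
    omega
  have hn0 : (0 : ℝ) ≤ (n : ℝ) := Nat.cast_nonneg n
  have hfinal : 0 < Phi D Q b - Phi D Q a := by
    rw [hsplit]
    rw [hGu', hpow] at hTgt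
    nlinarith [hSrc, hTgt, hGu, hXge, hn0, hM]
  linarith

end AuthorsAux2

open AuthorsAux2 in
/-- The PRP mediator is `u^{Ac}`-learnable: there is no infinite improvement path
(the finite improvement property), and the game has a pure Nash equilibrium. -/
theorem stmt7 {n m : ℕ} (hm : 0 < m) (D : Fin m → ℝ) (Q : Fin n → Fin m → ℝ)
    (hD : ∀ k, 0 ≤ D k) (hDsum : ∑ k, D k = 1)
    (hQ : ∀ j k, Q j k ∈ Set.Icc (0:ℝ) 1) :
    (¬ ∃ γ : ℕ → Fin n → Fin m, ∀ r : ℕ, ∃ p, ImpStep (uAc D Q) (γ r) (γ (r + 1)) p) ∧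
    ∃ a : Fin n → Fin m, ∀ (j : Fin n) (k : Fin m),
      uAc D Q (Function.update a j k) j ≤ uAc D Q a j := by
  constructor
  · rintro ⟨γ, hγ⟩
    have hmono : StrictMono fun r => Phi D Q (γ r) := by
      apply strictMono_nat_of_lt_succ
      intro r
      obtain ⟨p, hp⟩ := hγ r
      exact step_potential D Q hD hQ hp
    have hinj : Function.Injective γ := fun s t hst => hmono.injective (by rw [hst])
    obtain ⟨x, y, hxy, he⟩ := Finite.exists_ne_map_eq_of_infinite γ
    exact hxy (hinj he)
  · have : Nonempty (Fin m) := ⟨⟨0, hm⟩⟩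
    obtain ⟨a, ha⟩ := Finite.exists_max (Phi D Q)
    refine ⟨a, fun j k => ?_⟩
    by_contra hcon
    push_neg at hcon
    have hk : k ≠ a j := by
      rintro rfl
      rw [Function.update_eq_self] at hcon
      exact lt_irrefl _ hcon
    have hstep : ImpStep (uAc D Q) a (Function.update a j k) j :=
      ⟨fun i hij => Function.update_of_ne hij _ _, by rw [Function.update_self]; exact hk, hcon⟩
    exact absurd (ha (Function.update a j k))
      (not_le.2 (step_potential D Q hD hQ hstep))
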